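/- arXiv:1708.09094 — 4 statements merged into one kernel-verified Lean document; each statement's English description precedes it below -/
import Mathlib

section
/- Let H be a symmetric positive semidefinite linear operator on a product space X = X₁ × ⋯ × X_s with block decomposition H = D + U + U*, where D = Diag(H₁₁,…,H_ss) is the block diagonal part with each H_ii symmetric positive definite and U is the strict block upper triangular part. Then H + T = (D + U) D⁻¹ (D + U*) where T := U D⁻¹ U*, and H + T is symmetric positive definite. -/
/-!
Expanding the product gives `(D + U) D⁻¹ (D + Uᵀ) = D + U + Uᵀ + U D⁻¹ Uᵀ = H + T`.
Since `D` is block diagonal and `U` strictly block upper triangular, `D + U` is block upper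
triangular with the same diagonal blocks as `D`, so `det (D + U) = det D > 0`. Hence
`H + T = (D + Uᵀ)ᵀ D⁻¹ (D + Uᵀ)` is a congruence of the positive definite `D⁻¹` by an
invertible matrix, and is positive definite.
-/

open Matrix

namespace Matrix

variable {m R : Type*} [Fintype m] [DecidableEq m] [CommRing R]

theorem det_add_of_blockTriangular {α : Type*} [LinearOrder α] {b : m → α}
    {M N : Matrix m m R} (hM : M.BlockTriangular b) (hN : ∀ i j, b j ≤ b i → N i j = 0) :
    (M + N).det = M.det := by
  have hN' : N.BlockTriangular b := fun i j hij => hN i j hij.le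
  rw [(hM.add hN').det, hM.det]
  refine Finset.prod_congr rfl fun a _ => congrArg det ?_
  ext i j
  simp [toSquareBlock_def, hN i j (i.2.trans j.2.symm).ge]

theorem add_mul_nonsing_inv_mul_add {D : Matrix m m R} (hD : IsUnit D.det) (U V : Matrix m m R) :
    (D + U) * D⁻¹ * (D + V) = D + U + V + U * D⁻¹ * V := by
  have expand : (D + U) * D⁻¹ * (D + V) =
      D * D⁻¹ * D + D * D⁻¹ * V + U * (D⁻¹ * D) + U * D⁻¹ * V := by
    noncomm_ring
  rw [expand, mul_nonsing_inv D hD, nonsing_inv_mul D hD, one_mul, one_mul, mul_one]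
  abel

end Matrix

theorem stmt_2_general {N s : ℕ} (b : Fin N → Fin s)
    (H D U : Matrix (Fin N) (Fin N) ℝ)
    (hdecomp : H = D + U + Uᵀ)
    (hD : D.PosDef)
    (hDdiag : ∀ i j, b i ≠ b j → D i j = 0)
    (hU : ∀ i j, b j ≤ b i → U i j = 0) :
    H + U * D⁻¹ * Uᵀ = (D + U) * D⁻¹ * (D + Uᵀ) ∧ (H + U * D⁻¹ * Uᵀ).PosDef := by
  have hDsymm : Dᵀ = D := by
    simpa only [conjTranspose_eq_transpose_of_trivial] using hD.isHermitian.eq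
  have hDblock : D.BlockTriangular b := fun i j hij => hDdiag i j hij.ne'
  have hunit : IsUnit (D + Uᵀ) := by
    rw [← hDsymm, ← transpose_add, isUnit_iff_isUnit_det, det_transpose,
      det_add_of_blockTriangular hDblock hU]
    exact hD.det_pos.ne'.isUnit
  have hfactor : H + U * D⁻¹ * Uᵀ = (D + U) * D⁻¹ * (D + Uᵀ) := by
    rw [hdecomp, add_mul_nonsing_inv_mul_add hD.det_pos.ne'.isUnit]
  have hcongr : (D + U) * D⁻¹ * (D + Uᵀ) = (D + Uᵀ)ᴴ * D⁻¹ * (D + Uᵀ) := by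
    rw [conjTranspose_eq_transpose_of_trivial, transpose_add, transpose_transpose, hDsymm]
  refine ⟨hfactor, ?_⟩
  rw [hfactor, hcongr]
  exact hD.inv.conjTranspose_mul_mul_same (mulVec_injective_of_isUnit hunit)

theorem stmt_2 {N s : ℕ} (b : Fin N → Fin s)
    (H D U : Matrix (Fin N) (Fin N) ℝ)
    (hH : H.PosSemidef)
    (hdecomp : H = D + U + Uᵀ)
    (hD : D.PosDef)
    (hDdiag : ∀ i j, b i ≠ b j → D i j = 0)
    (hU : ∀ i j, b j ≤ b i → U i j = 0) :
    H + U * D⁻¹ * Uᵀ = (D + U) * D⁻¹ * (D + Uᵀ) ∧ (H + U * D⁻¹ * Uᵀ).PosDef :=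
  stmt_2_general b H D U hdecomp hD hDdiag hU
end

section
/- Let H be a symmetric positive semidefinite operator as in the sGS decomposition with T = U D⁻¹ U* and suppose Ĥ := H + T is positive definite. Given error vectors δ', δ with δ'₁ = δ₁, define Δ(δ',δ) := δ + U D⁻¹ (δ − δ'). Then ‖Ĥ^{-1/2} Δ(δ',δ)‖ ≤ ‖D^{-1/2}(δ − δ')‖ + ‖Ĥ^{-1/2} δ'‖. -/
/-! Writing `M = (D + U) D⁻¹`, the sGS factorization `Ĥ = M D Mᵀ` gives `Mᵀ Ĥ⁻¹ M = D⁻¹`, so the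
`Ĥ⁻¹`-seminorm of `M e` is the `D⁻¹`-seminorm of `e`. Since `Δ(δ', δ) = M (δ - δ') + δ'`, the bound
is the triangle inequality for the `Ĥ⁻¹`-seminorm. -/

open Matrix

namespace Matrix

variable {n : Type*} [Fintype n]

theorem sqrt_dotProduct_mulVec_add_le {A : Matrix n n ℝ} (hA : A.PosSemidef) (x y : n → ℝ) :
    √((x + y) ⬝ᵥ A *ᵥ (x + y)) ≤ √(x ⬝ᵥ A *ᵥ x) + √(y ⬝ᵥ A *ᵥ y) := by
  let normA := A.toSeminormedAddCommGroup hA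
  have norm_eq (z : n → ℝ) : @norm _ normA.toNorm z = √(z ⬝ᵥ A *ᵥ z) := by
    let _ := A.toInnerProductSpace hA
    rw [norm_eq_sqrt_re_inner (𝕜 := ℝ)]
    change √(RCLike.re ((A *ᵥ z) ⬝ᵥ star z)) = _
    simp [dotProduct_comm]
  simpa only [norm_eq] using @norm_add_le _ normA.toSeminormedAddGroup x y

variable [DecidableEq n] {R : Type*} [CommRing R]

theorem transpose_mul_inv_mul_of_isUnit_det {M B : Matrix n n R}
    (h : IsUnit (M * B * Mᵀ).det) : Mᵀ * (M * B * Mᵀ)⁻¹ * M = B⁻¹ := by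
  have hM : IsUnit M.det := by
    rw [det_mul, det_mul] at h
    exact isUnit_of_mul_isUnit_left (isUnit_of_mul_isUnit_left h)
  rw [mul_inv_rev, mul_inv_rev, ← Matrix.mul_assoc, ← Matrix.mul_assoc,
    mul_nonsing_inv _ (isUnit_det_transpose _ hM), Matrix.one_mul, Matrix.mul_assoc,
    nonsing_inv_mul _ hM, Matrix.mul_one]

theorem dotProduct_inv_mulVec_mulVec_of_isUnit_det {M B : Matrix n n R}
    (h : IsUnit (M * B * Mᵀ).det) (x : n → R) :
    (M *ᵥ x) ⬝ᵥ (M * B * Mᵀ)⁻¹ *ᵥ (M *ᵥ x) = x ⬝ᵥ B⁻¹ *ᵥ x := by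
  rw [mulVec_mulVec, ← vecMul_transpose, ← dotProduct_mulVec, mulVec_mulVec, ← Matrix.mul_assoc,
    transpose_mul_inv_mul_of_isUnit_det h]

theorem symmGaussSeidel_factorization {D U : Matrix n n R} (hD : IsUnit D.det) (hDt : Dᵀ = D) :
    D + U + Uᵀ + U * D⁻¹ * Uᵀ = (D + U) * D⁻¹ * D * ((D + U) * D⁻¹)ᵀ := by
  rw [transpose_mul, transpose_nonsing_inv, transpose_add, hDt, nonsing_inv_mul_cancel_right _ _ hD]
  simp only [Matrix.add_mul, Matrix.mul_add, nonsing_inv_mul _ hD,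
    mul_nonsing_inv_cancel_left _ _ hD, Matrix.mul_one, Matrix.mul_assoc]
  abel

end Matrix

theorem stmt_3_general {N : ℕ}
    (H D U : Matrix (Fin N) (Fin N) ℝ)
    (hdecomp : H = D + U + Uᵀ)
    (hD : D.PosDef)
    (hHhat : (H + U * D⁻¹ * Uᵀ).PosDef)
    (δ' δ : Fin N → ℝ) :
    Real.sqrt ((δ + (U * D⁻¹).mulVec (δ - δ')) ⬝ᵥ
        (H + U * D⁻¹ * Uᵀ)⁻¹.mulVec (δ + (U * D⁻¹).mulVec (δ - δ')))
      ≤ Real.sqrt ((δ - δ') ⬝ᵥ D⁻¹.mulVec (δ - δ'))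
        + Real.sqrt (δ' ⬝ᵥ (H + U * D⁻¹ * Uᵀ)⁻¹.mulVec δ') := by
  set M := (D + U) * D⁻¹ with hM
  have hDdet : IsUnit D.det := (isUnit_iff_isUnit_det D).mp hD.isUnit
  have hfactor : H + U * D⁻¹ * Uᵀ = M * D * Mᵀ := by
    rw [hdecomp]
    exact symmGaussSeidel_factorization hDdet (by simpa using hD.isHermitian.eq)
  have hΔ : δ + (U * D⁻¹) *ᵥ (δ - δ') = M *ᵥ (δ - δ') + δ' := by
    rw [hM, Matrix.add_mul, mul_nonsing_inv _ hDdet, add_mulVec, one_mulVec]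
    abel
  calc _ ≤ √((M *ᵥ (δ - δ')) ⬝ᵥ (H + U * D⁻¹ * Uᵀ)⁻¹ *ᵥ (M *ᵥ (δ - δ')))
        + √(δ' ⬝ᵥ (H + U * D⁻¹ * Uᵀ)⁻¹ *ᵥ δ') :=
        hΔ ▸ sqrt_dotProduct_mulVec_add_le hHhat.inv.posSemidef _ _
    _ = _ := by
      rw [hfactor, dotProduct_inv_mulVec_mulVec_of_isUnit_det]
      exact hfactor ▸ (isUnit_iff_isUnit_det _).mp hHhat.isUnit

theorem stmt_3 {N s : ℕ} [NeZero s] (b : Fin N → Fin s)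
    (H D U : Matrix (Fin N) (Fin N) ℝ)
    (hH : H.PosSemidef)
    (hdecomp : H = D + U + Uᵀ)
    (hD : D.PosDef)
    (hDdiag : ∀ i j, b i ≠ b j → D i j = 0)
    (hU : ∀ i j, b j ≤ b i → U i j = 0)
    (hHhat : (H + U * D⁻¹ * Uᵀ).PosDef)
    (δ' δ : Fin N → ℝ)
    (hfirst : ∀ i, b i = 0 → δ' i = δ i) :
    Real.sqrt ((δ + (U * D⁻¹).mulVec (δ - δ')) ⬝ᵥ
        (H + U * D⁻¹ * Uᵀ)⁻¹.mulVec (δ + (U * D⁻¹).mulVec (δ - δ')))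
      ≤ Real.sqrt ((δ - δ') ⬝ᵥ D⁻¹.mulVec (δ - δ'))
        + Real.sqrt (δ' ⬝ᵥ (H + U * D⁻¹ * Uᵀ)⁻¹.mulVec δ') :=
  stmt_3_general H D U hdecomp hD hHhat δ' δ
end

section
/- Let M and K be symmetric positive definite n×n real matrices and α > 0. Consider the 2n×2n block matrix A = [[(1/α)M, −K],[K, M]] and the preconditioner P = (1/α)·[[I, −√α I],[√α I, α I]]·Diag(M+√α K, M+√α K). Then every eigenvalue λ of P⁻¹A satisfies |λ − 1| ≤ √2/2, and P⁻¹A is diagonalizable. -/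
/-!
Write `s = √α`, `T = M + sK` and `N = M - sK`. A block computation gives
`P⁻¹A = ½ [[I, s T⁻¹N], [-s⁻¹ T⁻¹N, I]]`. Since `T + N = 2M` and `T - N = 2sK` are positive
definite, `T⁻¹N` is similar to the Hermitian matrix `T^{-1/2} N T^{-1/2}`, whose eigenvalues `μ`
lie in `(-1, 1)`. Every eigenvector `q` of `T⁻¹N` yields the eigenvectors `(s q, ± i q)` of `P⁻¹A`
with eigenvalues `(1 ± iμ)/2`, so `P⁻¹A` is diagonalizable and `|λ - 1| = √(1 + μ²)/2 ≤ √2/2`.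
-/

open Matrix Complex
open scoped ComplexOrder

variable {m : Type*} [DecidableEq m]

theorem Matrix.diagonal_one_add_mul_div_two {R : Type*} [Field R] (z : R) (μ : m → R) :
    diagonal (fun k => (1 + z * μ k) / 2) = (1 / 2 : R) • (1 + z • diagonal μ) := by
  ext i j
  by_cases h : i = j <;> simp [h]
  ring

variable [Fintype m]

theorem Matrix.spectrum_mul_diagonal_mul_inv {R : Type*} [Field R] {C : Matrix m m R}
    (hC : IsUnit C.det) (d : m → R) : spectrum R (C * diagonal d * C⁻¹) = Set.range d := by
  obtain ⟨u, rfl⟩ := (isUnit_iff_isUnit_det C).2 hC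
  rw [← coe_units_inv, spectrum.units_conjugate, spectrum_diagonal]

theorem Complex.norm_one_add_I_mul_div_two_sub_one_le {x : ℝ} (hx : |x| ≤ 1) :
    ‖(1 + I * x) / 2 - 1‖ ≤ √2 / 2 := by
  have h : (1 + I * x) / 2 - 1 = ((-1 : ℝ) + x * I) / 2 := by push_cast; ring
  rw [h, norm_div, norm_add_mul_I, Complex.norm_two]
  gcongr
  nlinarith [abs_le.1 hx]

namespace Matrix

variable {𝕜 : Type*} [RCLike 𝕜]

theorem IsHermitian.abs_eigenvalues_lt_one {S : Matrix m m 𝕜} (hS : S.IsHermitian)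
    (h₁ : (1 + S).PosDef) (h₂ : (1 - S).PosDef) (i : m) : |hS.eigenvalues i| < 1 := by
  set v := ⇑(hS.eigenvectorBasis i)
  have hv : v ≠ 0 := fun h =>
    hS.eigenvectorBasis.orthonormal.ne_zero i (by ext j; exact congrFun h j)
  have hvv : RCLike.re (star v ⬝ᵥ v) = 1 := by
    rw [dotProduct_comm, ← EuclideanSpace.inner_eq_star_dotProduct, inner_self_eq_norm_sq,
      hS.eigenvectorBasis.orthonormal.1 i, one_pow]
  have k₁ := RCLike.pos_iff.1 (h₁.dotProduct_mulVec_pos hv)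
  have k₂ := RCLike.pos_iff.1 (h₂.dotProduct_mulVec_pos hv)
  simp only [add_mulVec, sub_mulVec, one_mulVec, dotProduct_add, dotProduct_sub, map_add, map_sub,
    hvv] at k₁ k₂
  rw [abs_lt, hS.eigenvalues_eq]
  exact ⟨by linarith [k₁.1], by linarith [k₂.1]⟩

theorem IsHermitian.exists_mul_eq_mul_diagonal {S : Matrix m m 𝕜} (hS : S.IsHermitian) :
    ∃ U V : Matrix m m 𝕜, U * V = 1 ∧ S * U = U * diagonal (fun i => (hS.eigenvalues i : 𝕜)) := by
  have hU := Unitary.mul_star_self_of_mem hS.eigenvectorUnitary.2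
  have h := hS.conjStarAlgAut_star_eigenvectorUnitary
  rw [Unitary.conjStarAlgAut_star_apply] at h
  set U : Matrix m m 𝕜 := (hS.eigenvectorUnitary : Matrix m m 𝕜)
  refine ⟨U, star U, hU, ?_⟩
  rw [← Function.comp_def, ← h, ← mul_assoc, ← mul_assoc, hU, one_mul]

theorem PosDef.exists_sqrt {T : Matrix m m 𝕜} (hT : T.PosDef) :
    ∃ R : Matrix m m 𝕜, R.IsHermitian ∧ IsUnit R ∧ R * R = T := by
  open scoped MatrixOrder in
  exact ⟨CFC.sqrt T, (CFC.sqrt_nonneg T).posSemidef.1,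
    CFC.isUnit_sqrt_iff_isStrictlyPositive.2 hT.isStrictlyPositive,
    CFC.sqrt_mul_sqrt_self T hT.posSemidef.nonneg⟩

theorem exists_inv_mul_mul_eq_mul_diagonal_of_posDef {T N : Matrix m m 𝕜}
    (h₁ : (T + N).PosDef) (h₂ : (T - N).PosDef) :
    ∃ (Q Q' : Matrix m m 𝕜) (μ : m → ℝ), Q * Q' = 1 ∧
      T⁻¹ * N * Q = Q * diagonal (fun i => (μ i : 𝕜)) ∧ ∀ i, |μ i| < 1 := by
  have hT : T.PosDef := by
    simpa [smul_add, ← two_smul ℝ T] using (h₁.add h₂).smul (one_half_pos (α := ℝ))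
  obtain ⟨R, hRH, hRu, rfl⟩ := hT.exists_sqrt
  have hRd := (isUnit_iff_isUnit_det R).1 hRu
  set S := R⁻¹ * N * R⁻¹
  have hconj (X : Matrix m m 𝕜) : R⁻¹ * (R * R + X) * R⁻¹ = 1 + R⁻¹ * X * R⁻¹ := by
    rw [mul_add, add_mul, ← mul_assoc, nonsing_inv_mul _ hRd, one_mul, mul_nonsing_inv _ hRd]
  have hinj : Function.Injective (R⁻¹).mulVec :=
    mulVec_injective_of_isUnit (isUnit_nonsing_inv_iff.2 hRu)
  have k₁ : (1 + S).PosDef := by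
    rw [← hconj]
    simpa [hRH.inv.eq] using h₁.conjTranspose_mul_mul_same hinj
  have k₂ : (1 - S).PosDef := by
    rw [sub_eq_add_neg, ← neg_mul, ← mul_neg, ← hconj, ← sub_eq_add_neg]
    simpa [hRH.inv.eq] using h₂.conjTranspose_mul_mul_same hinj
  have hS : S.IsHermitian := by simpa using k₁.1.sub isHermitian_one
  obtain ⟨U, V, hUV, hSU⟩ := hS.exists_mul_eq_mul_diagonal
  refine ⟨R⁻¹ * U, V * R, _, ?_, ?_, hS.abs_eigenvalues_lt_one k₁ k₂⟩
  · rw [mul_assoc, ← mul_assoc U, hUV, one_mul, nonsing_inv_mul _ hRd]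
  · calc (R * R)⁻¹ * N * (R⁻¹ * U) = R⁻¹ * (S * U) := by simp only [S, mul_inv_rev, mul_assoc]
      _ = R⁻¹ * U * diagonal _ := by rw [hSU, mul_assoc]

end Matrix

theorem pmhss_inv_mul {𝕜 : Type*} [Field 𝕜] [NeZero (2 : 𝕜)] {M K : Matrix m m 𝕜} {s : 𝕜}
    (hs : s ≠ 0) (hT : IsUnit (M + s • K).det) :
    ((s ^ 2)⁻¹ • (fromBlocks 1 (-(s • 1)) (s • 1) (s ^ 2 • 1) *
        fromBlocks (M + s • K) 0 0 (M + s • K)))⁻¹ * fromBlocks ((s ^ 2)⁻¹ • M) (-K) K M =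
      (1 / 2 : 𝕜) • fromBlocks 1 (s • ((M + s • K)⁻¹ * (M - s • K)))
        (-(s⁻¹ • ((M + s • K)⁻¹ * (M - s • K)))) 1 := by
  set T := M + s • K with hTdef
  set F : Matrix (m ⊕ m) (m ⊕ m) 𝕜 := fromBlocks (s ^ 2 • 1) (s • 1) (-(s • 1)) 1
  have hWF :
      fromBlocks 1 (-(s • 1)) (s • 1) (s ^ 2 • 1) * F = (2 * s ^ 2) • (1 : Matrix _ _ 𝕜) := by
    rw [fromBlocks_multiply, ← fromBlocks_one, fromBlocks_smul]
    simp only [Matrix.mul_one, Matrix.mul_neg, smul_mul_assoc, mul_smul_comm, smul_smul, smul_neg]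
    congr 1 <;> module
  have hD : fromBlocks T 0 0 T * fromBlocks T⁻¹ 0 0 T⁻¹ = 1 := by
    simp [fromBlocks_multiply, mul_nonsing_inv _ hT]
  have hFA : F * fromBlocks ((s ^ 2)⁻¹ • M) (-K) K M =
      fromBlocks T (s • (M - s • K)) (-(s⁻¹ • (M - s • K))) T := by
    rw [fromBlocks_multiply]
    simp only [Matrix.one_mul, Matrix.neg_mul, Matrix.mul_neg, smul_mul_assoc, mul_smul_comm,
      smul_smul, smul_neg, hTdef]
    congr 1 <;> match_scalars <;> field_simp
  have hinv : ((s ^ 2)⁻¹ • (fromBlocks 1 (-(s • 1)) (s • 1) (s ^ 2 • 1) * fromBlocks T 0 0 T))⁻¹ =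
      (1 / 2 : 𝕜) • (fromBlocks T⁻¹ 0 0 T⁻¹ * F) := by
    refine inv_eq_right_inv ?_
    rw [smul_mul_smul_comm, mul_assoc, ← mul_assoc _ _ F, hD, Matrix.one_mul, hWF, smul_smul,
      show (s ^ 2)⁻¹ * (1 / 2) * (2 * s ^ 2) = (1 : 𝕜) by field_simp, one_smul]
  rw [hinv, smul_mul_assoc, mul_assoc, hFA, fromBlocks_multiply]
  simp [nonsing_inv_mul _ hT]

theorem fromBlocks_eq_mul_diagonal_mul_inv {S Q Q' : Matrix m m ℂ} {μ : m → ℂ} {c : ℂ}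
    (hc : c ≠ 0) (hQ : Q * Q' = 1) (hSQ : S * Q = Q * diagonal μ) :
    ∃ C : Matrix (m ⊕ m) (m ⊕ m) ℂ, IsUnit C.det ∧
      (1 / 2 : ℂ) • fromBlocks 1 (c • S) (-(c⁻¹ • S)) 1 =
        C * diagonal (Sum.elim (fun k => (1 + I * μ k) / 2) (fun k => (1 - I * μ k) / 2)) *
          C⁻¹ := by
  set C : Matrix (m ⊕ m) (m ⊕ m) ℂ := fromBlocks (c • Q) (c • Q) (I • Q) (-(I • Q))
  set C' : Matrix (m ⊕ m) (m ⊕ m) ℂ :=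
    fromBlocks ((2 * c)⁻¹ • Q') ((2 * I)⁻¹ • Q') ((2 * c)⁻¹ • Q') (-((2 * I)⁻¹ • Q'))
  have hCC' : C * C' = 1 := by
    simp only [C, C', fromBlocks_multiply, Matrix.neg_mul, Matrix.mul_neg, neg_neg,
      smul_mul_smul_comm, hQ, ← fromBlocks_one]
    congr 1 <;> match_scalars <;> field_simp <;> ring
  refine ⟨C, isUnit_det_of_right_inverse hCC', ?_⟩
  suffices h : (1 / 2 : ℂ) • fromBlocks 1 (c • S) (-(c⁻¹ • S)) 1 * C =
      C * diagonal (Sum.elim (fun k => (1 + I * μ k) / 2) (fun k => (1 - I * μ k) / 2)) by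
    rw [inv_eq_right_inv hCC', ← h, mul_assoc, hCC', mul_one]
  have h₂ := diagonal_one_add_mul_div_two (-I) μ
  simp only [neg_mul, ← sub_eq_add_neg] at h₂
  rw [← fromBlocks_diagonal, diagonal_one_add_mul_div_two, h₂]
  simp only [C, fromBlocks_multiply, smul_mul_assoc, mul_smul_comm, Matrix.mul_neg, Matrix.neg_mul,
    Matrix.one_mul, Matrix.mul_one, Matrix.mul_zero, Matrix.mul_add, smul_add, hSQ, add_zero,
    fromBlocks_smul]
  congr 1 <;> match_scalars <;> field_simp <;> ring_nf <;> simp [I_sq]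

theorem stmt_4 {n : ℕ} (M K : Matrix (Fin n) (Fin n) ℝ) (α : ℝ) (hα : 0 < α)
    (hM : M.PosDef) (hK : K.PosDef)
    (A P : Matrix (Fin n ⊕ Fin n) (Fin n ⊕ Fin n) ℝ)
    (hA : A = Matrix.fromBlocks (α⁻¹ • M) (-K) K M)
    (hP : P = α⁻¹ •
      (Matrix.fromBlocks (1 : Matrix (Fin n) (Fin n) ℝ) (-(Real.sqrt α • (1 : Matrix (Fin n) (Fin n) ℝ)))
          (Real.sqrt α • (1 : Matrix (Fin n) (Fin n) ℝ)) (α • (1 : Matrix (Fin n) (Fin n) ℝ)) *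
        Matrix.fromBlocks (M + Real.sqrt α • K) 0 0 (M + Real.sqrt α • K))) :
    (∀ lam ∈ spectrum ℂ ((P⁻¹ * A).map (algebraMap ℝ ℂ)),
        ‖lam - 1‖ ≤ Real.sqrt 2 / 2) ∧
    ∃ (C : Matrix (Fin n ⊕ Fin n) (Fin n ⊕ Fin n) ℂ) (d : Fin n ⊕ Fin n → ℂ),
      IsUnit C.det ∧ (P⁻¹ * A).map (algebraMap ℝ ℂ) = C * Matrix.diagonal d * C⁻¹ := by
  obtain ⟨s, hs, rfl⟩ : ∃ s, 0 < s ∧ s ^ 2 = α := ⟨√α, Real.sqrt_pos.2 hα, Real.sq_sqrt hα.le⟩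
  rw [Real.sqrt_sq hs.le] at hP
  subst hA hP
  have hsK := hK.smul hs
  obtain ⟨Q, Q', μ, hQ, hSQ, hμ⟩ :=
    exists_inv_mul_mul_eq_mul_diagonal_of_posDef (T := M + s • K) (N := M - s • K)
      (by simpa [two_smul] using hM.smul (two_pos : (0 : ℝ) < 2))
      (by simpa [two_smul] using hsK.smul (two_pos : (0 : ℝ) < 2))
  rw [pmhss_inv_mul hs.ne' (hM.add hsK).det_pos.ne'.isUnit]
  set S := (M + s • K)⁻¹ * (M - s • K)
  let φ := (algebraMap ℝ ℂ).mapMatrix (m := Fin n)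
  obtain ⟨C, hC, hX⟩ := fromBlocks_eq_mul_diagonal_mul_inv (S := φ S) (Q := φ Q) (Q' := φ Q')
    (μ := fun i => (μ i : ℂ)) (c := s) (by exact_mod_cast hs.ne') (by rw [← map_mul, hQ, map_one])
    (by rw [← map_mul, hSQ, map_mul]; simp [φ])
  have hXℂ : ((1 / 2 : ℝ) • fromBlocks 1 (s • S) (-(s⁻¹ • S)) 1).map (algebraMap ℝ ℂ) =
      (1 / 2 : ℂ) • fromBlocks 1 ((s : ℂ) • φ S) (-((s : ℂ)⁻¹ • φ S)) 1 := by
    simp [φ, fromBlocks_map, Matrix.map_smul', Matrix.map_neg]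
  rw [hXℂ, hX]
  refine ⟨?_, C, _, hC, rfl⟩
  rw [spectrum_mul_diagonal_mul_inv hC]
  rintro _ ⟨k | k, rfl⟩
  · exact norm_one_add_I_mul_div_two_sub_one_le (hμ k).le
  · simpa [sub_eq_add_neg] using
      norm_one_add_I_mul_div_two_sub_one_le (x := -μ k) (by rw [abs_neg]; exact (hμ k).le)
end

section
/- Let β > 0, a ≤ 0 ≤ b, α > 0 and let p, λ, μ, u be real numbers with αu = p − λ − μ, λ = Π_{[−β,β]}(λ + u) and u = Π_{[a,b]}(u + μ). Then u = Π_{[a,b]}(soft(p, β)/α). -/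
theorem stmt_19 (a b α β p lam mu u : ℝ) (ha : a ≤ 0) (hb : 0 ≤ b) (hα : 0 < α) (hβ : 0 < β)
    (h1 : α * u = p - lam - mu)
    (h2 : lam = max (-β) (min (lam + u) β))
    (h3 : u = max a (min (u + mu) b)) :
    u = max a (min ((Real.sign p * max (|p| - β) 0) / α) b) := by
  rcases lt_trichotomy u 0 with hu | hu | hu
  · -- u < 0 : lam = -β
    have hlam : lam = -β := by
      rcases min_cases (lam + u) β with ⟨e, l⟩ | ⟨e, l⟩
      · rw [e] at h2
        rcases max_cases (-β) (lam + u) with ⟨e2, l2⟩ | ⟨e2, l2⟩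
        · rw [e2] at h2; exact h2
        · rw [e2] at h2; linarith
      · rw [e] at h2
        have : lam = β := by rw [h2]; exact max_eq_right (by linarith)
        linarith
    rcases min_cases (u + mu) b with ⟨e, l⟩ | ⟨e, l⟩
    · rw [e] at h3
      rcases max_cases a (u + mu) with ⟨e2, l2⟩ | ⟨e2, l2⟩
      · -- u = a, mu ≤ 0
        rw [e2] at h3
        have hmu : mu ≤ 0 := by linarith [h3 ▸ l2]
        have hp0 : p < 0 := by nlinarith
        have hq : Real.sign p * max (|p| - β) 0 = p + β := by
          rw [Real.sign_of_neg hp0, abs_of_neg hp0, max_eq_left (by nlinarith)]; ring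
        rw [hq]
        have h4 : (p + β) / α ≤ a := by
          rw [div_le_iff₀ hα]; nlinarith
        rw [min_eq_left (by linarith : (p + β) / α ≤ b), max_eq_left h4]
        exact h3
      · -- mu = 0
        rw [e2] at h3
        have hmu : mu = 0 := by linarith
        have hp : p = α * u - β := by linarith
        have hp0 : p < 0 := by nlinarith
        have hq : Real.sign p * max (|p| - β) 0 = p + β := by
          rw [Real.sign_of_neg hp0, abs_of_neg hp0, max_eq_left (by nlinarith)]; ring
        rw [hq]
        have h4 : (p + β) / α = u := by field_simp; linarith
        rw [h4, min_eq_left (by linarith : u ≤ b), max_eq_right (by linarith : a ≤ u)]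
    · rw [e] at h3
      have : b ≤ u := h3 ▸ le_max_right a b
      linarith
  · -- u = 0
    subst hu
    have hl1 : -β ≤ lam := by rw [h2]; exact le_max_left _ _
    have hl2 : lam ≤ β := by
      rw [h2]; exact max_le (by linarith) (min_le_right _ _)
    have hp : p = lam + mu := by linarith
    rw [zero_add] at h3
    rcases lt_trichotomy mu 0 with hm | hm | hm
    · -- mu < 0 forces a = 0
      have ha0 : a = 0 := by
        rcases max_cases a (min mu b) with ⟨e2, l2⟩ | ⟨e2, l2⟩ <;> rw [e2] at h3
        · linarith
        · have := min_le_left mu b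
          linarith
      have hq : Real.sign p * max (|p| - β) 0 ≤ 0 := by
        rcases lt_trichotomy p 0 with hps | hps | hps
        · rw [Real.sign_of_neg hps]
          nlinarith [le_max_right (|p| - β) (0 : ℝ)]
        · simp [hps]
        · rw [Real.sign_of_pos hps, abs_of_pos hps,
            max_eq_right (by linarith : p - β ≤ 0)]; norm_num
      have h4 : Real.sign p * max (|p| - β) 0 / α ≤ 0 := by
        exact div_nonpos_of_nonpos_of_nonneg hq hα.le
      rw [ha0]
      rw [max_eq_left (le_trans (min_le_left _ _) h4)]
    · -- mu = 0, |p| ≤ β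
      subst hm
      have habs : |p| ≤ β := by rw [abs_le]; constructor <;> linarith
      have hq : max (|p| - β) 0 = 0 := max_eq_right (by linarith)
      rw [hq, mul_zero, zero_div, min_eq_left hb, max_eq_right ha]
    · -- mu > 0 forces b = 0
      have hb0 : b = 0 := by
        rcases max_cases a (min mu b) with ⟨e2, l2⟩ | ⟨e2, l2⟩ <;> rw [e2] at h3
        · rcases min_cases mu b with ⟨e3, l3⟩ | ⟨e3, l3⟩ <;> rw [e3] at l2 <;> linarith
        · rcases min_cases mu b with ⟨e3, l3⟩ | ⟨e3, l3⟩ <;> rw [e3] at h3 <;> linarith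
      have hq : 0 ≤ Real.sign p * max (|p| - β) 0 := by
        rcases lt_trichotomy p 0 with hps | hps | hps
        · rw [Real.sign_of_neg hps, abs_of_neg hps,
            max_eq_right (by linarith : -p - β ≤ 0)]; norm_num
        · simp [hps]
        · rw [Real.sign_of_pos hps]
          nlinarith [le_max_right (|p| - β) (0 : ℝ)]
      have h4 : 0 ≤ Real.sign p * max (|p| - β) 0 / α := div_nonneg hq hα.le
      rw [hb0, min_eq_right h4, max_eq_right ha]
  · -- u > 0 : lam = β
    have hlam : lam = β := by
      rcases min_cases (lam + u) β with ⟨e, l⟩ | ⟨e, l⟩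
      · rw [e] at h2
        rcases max_cases (-β) (lam + u) with ⟨e2, l2⟩ | ⟨e2, l2⟩
        · rw [e2] at h2; linarith
        · rw [e2] at h2; linarith
      · rw [e] at h2
        rw [h2]; exact max_eq_right (by linarith)
    rcases min_cases (u + mu) b with ⟨e, l⟩ | ⟨e, l⟩
    · rw [e] at h3
      rcases max_cases a (u + mu) with ⟨e2, l2⟩ | ⟨e2, l2⟩
      · rw [e2] at h3; linarith
      · -- mu = 0
        rw [e2] at h3
        have hmu : mu = 0 := by linarith
        have hp : p = α * u + β := by linarith
        have hp0 : 0 < p := by nlinarith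
        have hq : Real.sign p * max (|p| - β) 0 = p - β := by
          rw [Real.sign_of_pos hp0, abs_of_pos hp0, max_eq_left (by nlinarith)]; ring
        rw [hq]
        have h4 : (p - β) / α = u := by field_simp; linarith
        rw [h4, min_eq_left (by linarith : u ≤ b), max_eq_right (by linarith : a ≤ u)]
    · -- u = b, mu ≥ 0
      rw [e] at h3
      have hub : u = b := by rw [h3]; exact max_eq_right (by linarith)
      have hmu : 0 ≤ mu := by nlinarith [h3 ▸ le_max_right a b]
      have hp0 : 0 < p := by nlinarith
      have hq : Real.sign p * max (|p| - β) 0 = p - β := by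
        rw [Real.sign_of_pos hp0, abs_of_pos hp0, max_eq_left (by nlinarith)]; ring
      rw [hq]
      have h4 : b ≤ (p - β) / α := by
        rw [le_div_iff₀ hα]; nlinarith
      rw [min_eq_right h4, max_eq_right (by linarith : a ≤ b)]
      exact hub
end
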